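/- For every t with 0 < t < 1/√2, the vector x := (1/√(1/t² - 2)) · (1/t, 0, 0, 0, -√2) ∈ ℝ^{1,4} satisfies ⟨x, x⟩ = -1, x 0 > 0, and ⟨x, P t ε⟩ = 0 for every sign vector ε with ε 0 · ε 1 · ε 2 = -1. (Hence x is a point of H⁴ lying on all four odd positive hyperplanes: for t < 1/√2 these four walls of the deformed polytope meet at a common finite vertex, so the corresponding end of the polytope has closed up and the polytope has finite volume.) -/

import Mathlib

noncomputable def mink (v w : Fin 5 → ℝ) : ℝ :=
  -(v 0 * w 0) + v 1 * w 1 + v 2 * w 2 + v 3 * w 3 + v 4 * w 4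

/-- The positive octet space-like vectors of the deformed 24-cell (Table 6.1). -/
noncomputable def Pvec (t : ℝ) (ε : Fin 3 → ℝ) : Fin 5 → ℝ :=
  ![Real.sqrt 2, ε 0, ε 1, ε 2, (ε 0 * ε 1 * ε 2) / t]

/-- The negative octet space-like vectors of the deformed 24-cell (Table 6.1). -/
noncomputable def Nvec (t : ℝ) (ε : Fin 3 → ℝ) : Fin 5 → ℝ :=
  ![Real.sqrt 2, ε 0, ε 1, ε 2, -((ε 0 * ε 1 * ε 2) * t)]

/-!
The candidate vertex is the time-like vector `u = (1/t, 0, 0, 0, -√2)`, rescaled to unit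
Minkowski length. It is time-like exactly when `⟨u, u⟩ = 2 - 1/t² < 0`, i.e. when `t < 1/√2`,
and `⟨u, P t ε⟩ = -(√2/t)(1 + ε₀ε₁ε₂)` vanishes precisely on the odd sign vectors.
-/

lemma mink_smul_left (c : ℝ) (v w : Fin 5 → ℝ) : mink (c • v) w = c * mink v w := by
  simp only [mink, Pi.smul_apply, smul_eq_mul]
  ring

lemma mink_smul_right (c : ℝ) (v w : Fin 5 → ℝ) : mink v (c • w) = c * mink v w := by
  simp only [mink, Pi.smul_apply, smul_eq_mul]
  ring

lemma mink_smul_self (c : ℝ) (v : Fin 5 → ℝ) : mink (c • v) (c • v) = c ^ 2 * mink v v := by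
  rw [mink_smul_left, mink_smul_right]
  ring

lemma mink_inv_sqrt_smul_self {v : Fin 5 → ℝ} {d : ℝ} (hd : 0 < d) (hv : mink v v = -d) :
    mink ((1 / Real.sqrt d) • v) ((1 / Real.sqrt d) • v) = -1 := by
  rw [mink_smul_self, hv, div_pow, Real.sq_sqrt hd.le]
  field_simp

lemma mink_axis_self (a b : ℝ) :
    mink ![a, 0, 0, 0, b] ![a, 0, 0, 0, b] = -(a ^ 2 - b ^ 2) := by
  simp only [mink, Matrix.cons_val]
  ring

lemma mink_axis_Pvec (a b t : ℝ) (ε : Fin 3 → ℝ) :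
    mink ![a, 0, 0, 0, b] (Pvec t ε) = -(a * Real.sqrt 2) + b * ((ε 0 * ε 1 * ε 2) / t) := by
  simp only [mink, Pvec, Matrix.cons_val]
  ring

lemma one_div_sq_sub_two_pos {t : ℝ} (ht0 : 0 < t) (ht : t < 1 / Real.sqrt 2) :
    0 < 1 / t ^ 2 - 2 := by
  have hts : t * Real.sqrt 2 < 1 := (lt_div_iff₀ (by positivity)).mp ht
  have ht2 : t ^ 2 * 2 < 1 :=
    calc t ^ 2 * 2 = (t * Real.sqrt 2) ^ 2 := by rw [mul_pow, Real.sq_sqrt zero_le_two]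
      _ < 1 := pow_lt_one₀ (by positivity) hts two_ne_zero
  rw [sub_pos, lt_div_iff₀ (by positivity)]
  linarith

theorem odd_positive_walls_meet_at_finite_vertex (t : ℝ) (ht0 : 0 < t)
    (ht : t < 1 / Real.sqrt 2) :
    let x : Fin 5 → ℝ :=
      (1 / Real.sqrt (1 / t ^ 2 - 2)) • (![1 / t, 0, 0, 0, -Real.sqrt 2] : Fin 5 → ℝ)
    mink x x = -1 ∧ 0 < x 0 ∧
    ∀ ε : Fin 3 → ℝ, (∀ i, ε i = -1 ∨ ε i = 1) → ε 0 * ε 1 * ε 2 = -1 →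
      mink x (Pvec t ε) = 0 := by
  intro x
  have hd := one_div_sq_sub_two_pos ht0 ht
  refine ⟨mink_inv_sqrt_smul_self hd ?_, ?_, fun ε _ hodd => ?_⟩
  · rw [mink_axis_self, neg_sq, Real.sq_sqrt zero_le_two, div_pow, one_pow]
  · have : 0 < Real.sqrt (1 / t ^ 2 - 2) := Real.sqrt_pos.mpr hd
    show 0 < 1 / Real.sqrt (1 / t ^ 2 - 2) * (1 / t)
    positivity
  · rw [mink_smul_left, mink_axis_Pvec, hodd]
    ring
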